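/- arXiv:0806.2984 — 2 statements merged into one kernel-verified Lean document; each statement's English description precedes it below -/
import Mathlib

section
/- Let ω > 0, γ, D_pp, D_qq, D_pq be real constants and let 𝓛 be the dual Lindbladian (with zero perturbation potential) acting on operators on C_c^∞(ℝ,ℂ). Then for every u ∈ C_c^∞(ℝ,ℂ), 𝓛(pq + qp)u = [ 2(p² − ω² q²) − 2γ(pq + qp) + 4 D_pq ] u. -/
open MeasureTheory Complex
open scoped ComplexOrder

noncomputable section

/-- Operators acting on complex-valued functions on `ℝ`. -/
abbrev Op : Type := (ℝ → ℂ) → (ℝ → ℂ)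

/-- The momentum operator `(p u)(x) = -i u'(x)`. -/
def pOp : Op := fun u x => -Complex.I * deriv u x

/-- The position operator `(q u)(x) = x * u(x)`. -/
def qOp : Op := fun u x => (x : ℂ) * u x

/-- Multiplication operator by a real-valued function. -/
def mulOp (f : ℝ → ℝ) : Op := fun u x => (f x : ℂ) * u x

/-- Commutator of two operators. -/
def opComm (A B : Op) : Op := fun u => A (B u) - B (A u)

/-- Anticommutator of two operators. -/
def opACom (A B : Op) : Op := fun u => A (B u) + B (A u)

/-- The `L²(ℝ,ℂ)` inner product, antilinear in the first argument. -/
def ip (u v : ℝ → ℂ) : ℂ := ∫ x : ℝ, (starRingEnd ℂ) (u x) * v x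

/-- `u ∈ C_c^∞(ℝ,ℂ)`: smooth and compactly supported. -/
def IsTest (u : ℝ → ℂ) : Prop := ContDiff ℝ (⊤ : ℕ∞) u ∧ HasCompactSupport u

/-- The dual Lindbladian (zero perturbation potential):
`𝓛(A) = (i/2)[p² + ω² q², A] + iγ{p,[q,A]} − D_qq [p,[p,A]] − D_pp [q,[q,A]] + 2 D_pq [q,[p,A]]`. -/
def Lind (ω γ Dpp Dqq Dpq : ℝ) (A : Op) : Op :=
  (Complex.I / 2) • opComm (fun u => pOp (pOp u) + ((ω^2 : ℝ) : ℂ) • qOp (qOp u)) A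
  + (Complex.I * (γ : ℂ)) • opACom pOp (opComm qOp A)
  - (Dqq : ℂ) • opComm pOp (opComm pOp A)
  - (Dpp : ℂ) • opComm qOp (opComm qOp A)
  + ((2 * Dpq : ℝ) : ℂ) • opComm qOp (opComm pOp A)

/-! On smooth functions `p` and `q` act as linear endomorphisms with `[q, p] = i`, and `𝓛(A)` is an
algebraic expression in `p`, `q`, `A`, so the claim is an identity in any complex algebra containing
a canonical pair. There `[q, pq + qp] = 2i q` and `[p, pq + qp] = -2i p`; by the Leibniz rule
`[p² + ω² q², pq + qp] = 4i (ω² q² - p²)`, `{p, [q, pq + qp]} = 2i (pq + qp)`,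
`[q, [p, pq + qp]] = 2`, and both `[p, [p, pq + qp]]` and `[q, [q, pq + qp]]` vanish. -/

section CanonicalCommutation

attribute [local instance] LieRing.ofAssociativeRing

variable {R : Type*} [Ring R]

theorem Ring.mul_lie (a b c : R) : ⁅a * b, c⁆ = a * ⁅b, c⁆ + ⁅a, c⁆ * b := by
  simp only [Ring.lie_def]; noncomm_ring

theorem Ring.lie_mul (a b c : R) : ⁅a, b * c⁆ = ⁅a, b⁆ * c + b * ⁅a, c⁆ := by
  simp only [Ring.lie_def]; noncomm_ring

variable [Algebra ℂ R]

def lindbladDual (ω γ Dpp Dqq Dpq : ℝ) (p q A : R) : R :=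
  (I / 2) • ⁅p * p + ((ω ^ 2 : ℝ) : ℂ) • (q * q), A⁆
  + (I * (γ : ℂ)) • (p * ⁅q, A⁆ + ⁅q, A⁆ * p)
  - (Dqq : ℂ) • ⁅p, ⁅p, A⁆⁆
  - (Dpp : ℂ) • ⁅q, ⁅q, A⁆⁆
  + ((2 * Dpq : ℝ) : ℂ) • ⁅q, ⁅p, A⁆⁆

variable {p q : R}

theorem lie_q_pq_add_qp (h : ⁅q, p⁆ = I • 1) : ⁅q, p * q + q * p⁆ = (2 * I) • q := by
  rw [lie_add, Ring.lie_mul, Ring.lie_mul, h, lie_self]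
  simp only [smul_mul_assoc, mul_smul_comm, one_mul, mul_one, zero_mul, mul_zero]
  module

theorem lie_p_pq_add_qp (h : ⁅q, p⁆ = I • 1) : ⁅p, p * q + q * p⁆ = -(2 * I) • p := by
  rw [lie_add, Ring.lie_mul, Ring.lie_mul, ← lie_skew p q, h, lie_self]
  simp only [smul_mul_assoc, mul_smul_comm, one_mul, mul_one, zero_mul, mul_zero, neg_mul, mul_neg]
  module

theorem lindbladDual_pq_add_qp (ω γ Dpp Dqq Dpq : ℝ) (h : ⁅q, p⁆ = I • 1) :
    lindbladDual ω γ Dpp Dqq Dpq p q (p * q + q * p) =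
      (2 : ℂ) • (p * p - ((ω ^ 2 : ℝ) : ℂ) • (q * q)) - ((2 * γ : ℝ) : ℂ) • (p * q + q * p)
        + ((4 * Dpq : ℝ) : ℂ) • 1 := by
  have hq := lie_q_pq_add_qp h
  have hp := lie_p_pq_add_qp h
  have hH : ⁅p * p + ((ω ^ 2 : ℝ) : ℂ) • (q * q), p * q + q * p⁆
      = (4 * I) • (((ω ^ 2 : ℝ) : ℂ) • (q * q) - p * p) := by
    simp only [add_lie, smul_lie, Ring.mul_lie, hq, hp, smul_mul_assoc, mul_smul_comm]
    module
  have hγ : p * ⁅q, p * q + q * p⁆ + ⁅q, p * q + q * p⁆ * p = (2 * I) • (p * q + q * p) := by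
    rw [hq, smul_mul_assoc, mul_smul_comm, smul_add]
  have hpp : ⁅p, ⁅p, p * q + q * p⁆⁆ = 0 := by rw [hp, lie_smul, lie_self, smul_zero]
  have hqq : ⁅q, ⁅q, p * q + q * p⁆⁆ = 0 := by rw [hq, lie_smul, lie_self, smul_zero]
  have hqp : ⁅q, ⁅p, p * q + q * p⁆⁆ = (2 : ℂ) • 1 := by
    rw [hp, lie_smul, h, smul_smul]
    congr 1
    linear_combination (-2 : ℂ) * I_mul_I
  rw [lindbladDual, hH, hγ, hpp, hqq, hqp]
  push_cast
  linear_combination (norm := module)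
    I_mul_I • ((2 : ℂ) • ((ω : ℂ) ^ 2 • (q * q) - p * p) + (2 * γ : ℂ) • (p * q + q * p))

section SmoothFunctions

open scoped ContDiff

def smoothFunctions : Submodule ℂ (ℝ → ℂ) where
  carrier := {u | ContDiff ℝ ∞ u}
  add_mem' {u v} (hu : ContDiff ℝ ∞ u) (hv : ContDiff ℝ ∞ v) := hu.add hv
  zero_mem' := (contDiff_const : ContDiff ℝ ∞ fun _ => (0 : ℂ))
  smul_mem' c u (hu : ContDiff ℝ ∞ u) := hu.const_smul c

theorem mem_smoothFunctions {u : ℝ → ℂ} : u ∈ smoothFunctions ↔ ContDiff ℝ ∞ u := Iff.rfl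

theorem differentiable_of_mem_smoothFunctions {u : ℝ → ℂ} (hu : u ∈ smoothFunctions) :
    Differentiable ℝ u :=
  (mem_smoothFunctions.1 hu).differentiable (by simp)

theorem contDiff_pOp {u : ℝ → ℂ} (hu : ContDiff ℝ ∞ u) : ContDiff ℝ ∞ (pOp u) :=
  contDiff_const.mul (contDiff_infty_iff_deriv.mp hu).2

theorem contDiff_qOp {u : ℝ → ℂ} (hu : ContDiff ℝ ∞ u) : ContDiff ℝ ∞ (qOp u) :=
  ofRealCLM.contDiff.mul hu

def pEnd : Module.End ℂ smoothFunctions where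
  toFun u := ⟨pOp u, contDiff_pOp (mem_smoothFunctions.1 u.2)⟩
  map_add' u v := by
    ext x
    have hu := differentiable_of_mem_smoothFunctions u.2 x
    have hv := differentiable_of_mem_smoothFunctions v.2 x
    simp [pOp, deriv_add hu hv, mul_add]
  map_smul' c u := by
    ext x
    simp [pOp, deriv_const_smul c (differentiable_of_mem_smoothFunctions u.2 x)]
    ring

def qEnd : Module.End ℂ smoothFunctions where
  toFun u := ⟨qOp u, contDiff_qOp (mem_smoothFunctions.1 u.2)⟩
  map_add' u v := by ext x; simp [qOp, mul_add]
  map_smul' c u := by ext x; simp [qOp]; ring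

theorem deriv_qOp {u : ℝ → ℂ} {x : ℝ} (hu : DifferentiableAt ℝ u x) :
    deriv (qOp u) x = u x + x * deriv u x := by
  have := ((hasDerivAt_id x).ofReal_comp).mul hu.hasDerivAt
  rw [ofReal_one, one_mul] at this
  exact this.deriv

theorem qOp_pOp_sub_pOp_qOp {u : ℝ → ℂ} {x : ℝ} (hu : DifferentiableAt ℝ u x) :
    qOp (pOp u) x - pOp (qOp u) x = I * u x := by
  simp only [qOp, pOp, deriv_qOp hu]
  ring

theorem lie_qEnd_pEnd : ⁅qEnd, pEnd⁆ = I • 1 := by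
  ext u x
  exact qOp_pOp_sub_pOp_qOp (differentiable_of_mem_smoothFunctions u.2 x)

end SmoothFunctions

/-- `Op` acts on all functions, where `deriv` takes junk values; the operator algebra is done in
`Module.End ℂ smoothFunctions` and transported back along this relation. -/
def ActsOnSmoothAs (A : Op) (T : Module.End ℂ smoothFunctions) : Prop :=
  ∀ u : smoothFunctions, A u = T u

namespace ActsOnSmoothAs

variable {A B : Op} {S T : Module.End ℂ smoothFunctions}

theorem comp (hA : ActsOnSmoothAs A S) (hB : ActsOnSmoothAs B T) :
    ActsOnSmoothAs (fun u => A (B u)) (S * T) := fun u => by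
  change A (B u) = _
  rw [hB u, hA]
  rfl

theorem add (hA : ActsOnSmoothAs A S) (hB : ActsOnSmoothAs B T) :
    ActsOnSmoothAs (A + B) (S + T) := fun u => by
  simp [hA u, hB u]

theorem sub (hA : ActsOnSmoothAs A S) (hB : ActsOnSmoothAs B T) :
    ActsOnSmoothAs (A - B) (S - T) := fun u => by
  simp [hA u, hB u]

theorem smul (c : ℂ) (hA : ActsOnSmoothAs A S) : ActsOnSmoothAs (c • A) (c • S) := fun u => by
  simp [hA u]

theorem opComm (hA : ActsOnSmoothAs A S) (hB : ActsOnSmoothAs B T) :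
    ActsOnSmoothAs (opComm A B) ⁅S, T⁆ :=
  (hA.comp hB).sub (hB.comp hA)

theorem opACom (hA : ActsOnSmoothAs A S) (hB : ActsOnSmoothAs B T) :
    ActsOnSmoothAs (opACom A B) (S * T + T * S) :=
  (hA.comp hB).add (hB.comp hA)

end ActsOnSmoothAs

theorem actsOnSmoothAs_pOp : ActsOnSmoothAs pOp pEnd := fun _ => rfl

theorem actsOnSmoothAs_qOp : ActsOnSmoothAs qOp qEnd := fun _ => rfl

theorem actsOnSmoothAs_id : ActsOnSmoothAs (fun v => v) 1 := fun _ => rfl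

theorem ActsOnSmoothAs.lind (ω γ Dpp Dqq Dpq : ℝ) {A : Op} {T : Module.End ℂ smoothFunctions}
    (hA : ActsOnSmoothAs A T) :
    ActsOnSmoothAs (Lind ω γ Dpp Dqq Dpq A) (lindbladDual ω γ Dpp Dqq Dpq pEnd qEnd T) := by
  have hp := actsOnSmoothAs_pOp
  have hq := actsOnSmoothAs_qOp
  exact (((hp.comp hp).add ((hq.comp hq).smul _)).opComm hA).smul _
    |>.add ((hp.opACom (hq.opComm hA)).smul _)
    |>.sub ((hp.opComm (hp.opComm hA)).smul _)
    |>.sub ((hq.opComm (hq.opComm hA)).smul _)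
    |>.add ((hq.opComm (hp.opComm hA)).smul _)

theorem Lind_of_pq_qp_general (ω γ Dpp Dqq Dpq : ℝ)
    (u : ℝ → ℂ) (hu : IsTest u) :
    Lind ω γ Dpp Dqq Dpq (opACom pOp qOp) u =
      (((2 : ℝ) : ℂ) • (fun v => pOp (pOp v) - ((ω^2 : ℝ) : ℂ) • qOp (qOp v) : Op)
        + ((-(2*γ) : ℝ) : ℂ) • opACom pOp qOp
        + ((4*Dpq : ℝ) : ℂ) • (fun v => v : Op)) u := by
  have hp := actsOnSmoothAs_pOp
  have hq := actsOnSmoothAs_qOp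
  have hA := hp.opACom hq
  have hRHS := ((((hp.comp hp).sub ((hq.comp hq).smul ((ω ^ 2 : ℝ) : ℂ))).smul ((2 : ℝ) : ℂ)).add
    (hA.smul ((-(2 * γ) : ℝ) : ℂ))).add (actsOnSmoothAs_id.smul ((4 * Dpq : ℝ) : ℂ))
  set v : smoothFunctions := ⟨u, hu.1⟩
  rw [hA.lind ω γ Dpp Dqq Dpq v, lindbladDual_pq_add_qp ω γ Dpp Dqq Dpq lie_qEnd_pEnd]
  refine .trans ?_ (hRHS v).symm
  congr 2
  push_cast
  module

/-- `𝓛(pq + qp) = 2(p² − ω² q²) − 2γ(pq + qp) + 4 D_pq` on `C_c^∞(ℝ,ℂ)`. -/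
theorem Lind_of_pq_qp (ω γ Dpp Dqq Dpq : ℝ) (hω : 0 < ω)
    (u : ℝ → ℂ) (hu : IsTest u) :
    Lind ω γ Dpp Dqq Dpq (opACom pOp qOp) u =
      (((2 : ℝ) : ℂ) • (fun v => pOp (pOp v) - ((ω^2 : ℝ) : ℂ) • qOp (qOp v) : Op)
        + ((-(2*γ) : ℝ) : ℂ) • opACom pOp qOp
        + ((4*Dpq : ℝ) : ℂ) • (fun v => v : Op)) u :=
  Lind_of_pq_qp_general ω γ Dpp Dqq Dpq u hu
end CanonicalCommutation
end
end

section
/- Let r, s > 0 be real numbers with rs > 1, set X = r p² + (pq + qp) + s q² and R = r^{1/2} p + r^{−1/2} q, viewed as operators on C_c^∞(ℝ,ℂ). Then for every u ∈ C_c^∞(ℝ,ℂ): ⟨u, X² u⟩ = (s − 1/r)² ⟨u, q⁴ u⟩ + 2(s − 1/r) ⟨u, q R² q u⟩ + ⟨u, R⁴ u⟩ − 2(rs − 1) ‖u‖². -/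
open MeasureTheory Complex
open scoped ComplexOrder

noncomputable section

/-- `X = r p² + (pq + qp) + s q²`. -/
def Xop (r s : ℝ) : Op := (r : ℂ) • (pOp ∘ pOp) + opACom pOp qOp + (s : ℂ) • (qOp ∘ qOp)

/-- `R = r^{1/2} p + r^{−1/2} q`. -/
def Rop (r : ℝ) : Op := ((Real.sqrt r : ℝ) : ℂ) • pOp + (((Real.sqrt r)⁻¹ : ℝ) : ℂ) • qOp

open scoped ContDiff

/-! Completing the square, `X = R² + (s - 1/r) q²` on smooth functions. Since `[R, q] = -i√r`,
`R² q = q R² - 2i√r R`, and the cross terms of `X²` collapse: `R² q² + q² R² = 2 q R² q - 2r`.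
The inner product against a compactly supported `u` is linear in its second argument, so the
operator identity for `X²` gives the claimed one. -/

theorem Rop_eq (r : ℝ) (v : ℝ → ℂ) :
    Rop r v = ((√r : ℝ) : ℂ) • pOp v + (((√r)⁻¹ : ℝ) : ℂ) • qOp v :=
  rfl

section Smoothness

variable {v : ℝ → ℂ}

theorem ContDiff.pOp (hv : ContDiff ℝ ∞ v) : ContDiff ℝ ∞ (pOp v) :=
  contDiff_const.mul (contDiff_infty_iff_deriv.mp hv).2

theorem ContDiff.qOp (hv : ContDiff ℝ ∞ v) : ContDiff ℝ ∞ (qOp v) :=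
  ofRealCLM.contDiff.mul hv

theorem ContDiff.Rop (r : ℝ) (hv : ContDiff ℝ ∞ v) : ContDiff ℝ ∞ (Rop r v) :=
  Rop_eq r v ▸ (contDiff_const.smul hv.pOp).add (contDiff_const.smul hv.qOp)

end Smoothness

section Linearity

variable {v w : ℝ → ℂ}

theorem pOp_add (hv : Differentiable ℝ v) (hw : Differentiable ℝ w) :
    pOp (v + w) = pOp v + pOp w := by
  funext x
  simp only [pOp, Pi.add_apply, deriv_add (hv x) (hw x)]
  ring

theorem pOp_smul (c : ℂ) (v : ℝ → ℂ) : pOp (c • v) = c • pOp v := by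
  funext x
  simp only [pOp, Pi.smul_apply, smul_eq_mul, deriv_const_smul_field c]
  ring

theorem qOp_add (v w : ℝ → ℂ) : qOp (v + w) = qOp v + qOp w := by
  funext x
  exact mul_add _ _ _

theorem qOp_smul (c : ℂ) (v : ℝ → ℂ) : qOp (c • v) = c • qOp v := by
  funext x
  exact mul_left_comm _ _ _

theorem Rop_add (r : ℝ) (hv : Differentiable ℝ v) (hw : Differentiable ℝ w) :
    Rop r (v + w) = Rop r v + Rop r w := by
  simp only [Rop_eq, pOp_add hv hw, qOp_add, smul_add]
  abel

theorem Rop_smul (r : ℝ) (c : ℂ) (v : ℝ → ℂ) : Rop r (c • v) = c • Rop r v := by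
  simp only [Rop_eq, pOp_smul, qOp_smul, smul_add, smul_comm c]

end Linearity

section Commutators

variable {v : ℝ → ℂ}

theorem pOp_qOp (hv : Differentiable ℝ v) : pOp (qOp v) = qOp (pOp v) + (-I) • v := by
  funext x
  have hqv : HasDerivAt (qOp v) (1 * v x + x * deriv v x) x :=
    (hasDerivAt_id x).ofReal_comp.mul (hv x).hasDerivAt
  simp only [pOp, qOp, Pi.add_apply, Pi.smul_apply, smul_eq_mul, hqv.deriv]
  ring

theorem Rop_qOp (r : ℝ) (hv : Differentiable ℝ v) :
    Rop r (qOp v) = qOp (Rop r v) + (-I * √r) • v := by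
  rw [Rop_eq, Rop_eq, pOp_qOp hv, qOp_add, qOp_smul, qOp_smul]
  module

theorem Rop_Rop_qOp (r : ℝ) (hv : ContDiff ℝ ∞ v) :
    Rop r (Rop r (qOp v)) = qOp (Rop r (Rop r v)) + (2 * (-I * √r)) • Rop r v := by
  rw [Rop_qOp r (hv.differentiable (by simp)),
    Rop_add r ((hv.Rop r).qOp.differentiable (by simp))
      ((hv.differentiable (by simp)).const_smul _),
    Rop_smul, Rop_qOp r ((hv.Rop r).differentiable (by simp))]
  module

end Commutators

theorem Xop_eq {r : ℝ} (s : ℝ) (hr : 0 < r) {v : ℝ → ℂ} (hv : ContDiff ℝ ∞ v) :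
    Xop r s v = Rop r (Rop r v) + ((s - 1 / r : ℝ) : ℂ) • qOp (qOp v) := by
  have hsqrt : ((√r : ℝ) : ℂ) * (√r : ℝ) = r := by exact_mod_cast Real.mul_self_sqrt hr.le
  have hsqrt_ne : ((√r : ℝ) : ℂ) ≠ 0 := by exact_mod_cast (Real.sqrt_pos.mpr hr).ne'
  have hpR : pOp (Rop r v) =
      ((√r : ℝ) : ℂ) • pOp (pOp v) + (((√r)⁻¹ : ℝ) : ℂ) • pOp (qOp v) := by
    rw [Rop_eq, pOp_add ((hv.pOp.differentiable (by simp)).const_smul _)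
      ((hv.qOp.differentiable (by simp)).const_smul _), pOp_smul, pOp_smul]
  rw [Rop_eq r (Rop r v), hpR, Rop_eq r v, qOp_add, qOp_smul, qOp_smul]
  simp only [Xop, opACom, Pi.add_apply, Pi.smul_apply, Function.comp_apply, smul_add, smul_smul]
  push_cast
  simp only [mul_inv_cancel₀ hsqrt_ne, inv_mul_cancel₀ hsqrt_ne, ← mul_inv, hsqrt]
  module

theorem Rop_Rop_add_smul (r : ℝ) (c : ℂ) {v w : ℝ → ℂ} (hv : ContDiff ℝ ∞ v)
    (hw : ContDiff ℝ ∞ w) :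
    Rop r (Rop r (v + c • w)) = Rop r (Rop r v) + c • Rop r (Rop r w) := by
  rw [Rop_add r (hv.differentiable (by simp)) ((hw.differentiable (by simp)).const_smul c),
    Rop_smul, Rop_add r ((hv.Rop r).differentiable (by simp))
      (((hw.Rop r).differentiable (by simp)).const_smul c), Rop_smul]

theorem Xop_Xop_eq {r : ℝ} (s : ℝ) (hr : 0 < r) {v : ℝ → ℂ} (hv : ContDiff ℝ ∞ v) :
    Xop r s (Xop r s v) =
      ((s - 1 / r : ℝ) : ℂ) ^ 2 • qOp (qOp (qOp (qOp v)))
      + (2 * ((s - 1 / r : ℝ) : ℂ)) • qOp (Rop r (Rop r (qOp v)))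
      + Rop r (Rop r (Rop r (Rop r v)))
      - (2 * ((r * s - 1 : ℝ) : ℂ)) • v := by
  have hk : (-I * ((√r : ℝ) : ℂ)) ^ 2 = -r := by
    rw [mul_pow, neg_pow_two, I_sq, ← ofReal_pow, Real.sq_sqrt hr.le]
    ring
  have hRRqq : Rop r (Rop r (qOp (qOp v))) =
      qOp (Rop r (Rop r (qOp v))) + (2 * (-I * √r)) • qOp (Rop r v) - (2 * r : ℂ) • v := by
    rw [Rop_Rop_qOp r hv.qOp, Rop_qOp r (hv.differentiable (by simp))]
    linear_combination (norm := module) (2 * hk) • v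
  have hqqRR : qOp (qOp (Rop r (Rop r v))) =
      qOp (Rop r (Rop r (qOp v))) - (2 * (-I * √r)) • qOp (Rop r v) := by
    rw [Rop_Rop_qOp r hv, qOp_add, qOp_smul]
    abel
  have hXv := Xop_eq s hr hv
  have hXv_smooth : ContDiff ℝ ∞ (Xop r s v) :=
    hXv ▸ ((hv.Rop r).Rop r).add (contDiff_const.smul hv.qOp.qOp)
  rw [Xop_eq s hr hXv_smooth, hXv, Rop_Rop_add_smul r _ ((hv.Rop r).Rop r) hv.qOp.qOp,
    qOp_add, qOp_add, qOp_smul, qOp_smul, hRRqq, hqqRR]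
  have hcr : ((s - 1 / r : ℝ) : ℂ) * r = ((r * s - 1 : ℝ) : ℂ) := by
    push_cast
    field_simp
  linear_combination (norm := module) (-2 * hcr) • v

section InnerProduct

variable {u v w : ℝ → ℂ}

theorem ip_smul (c : ℂ) (u v : ℝ → ℂ) : ip u (c • v) = c * ip u v := by
  simp only [ip, Pi.smul_apply, smul_eq_mul, mul_left_comm _ c, integral_const_mul]

theorem integrable_conj_mul (hu : Continuous u) (hu' : HasCompactSupport u) (hv : Continuous v) :
    Integrable (fun x => (starRingEnd ℂ) (u x) * v x) :=
  ((continuous_conj.comp hu).mul hv).integrable_of_hasCompactSupport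
    (hu'.comp_left (map_zero _)).mul_right

theorem ip_add (hu : Continuous u) (hu' : HasCompactSupport u) (hv : Continuous v)
    (hw : Continuous w) : ip u (v + w) = ip u v + ip u w := by
  simp only [ip, Pi.add_apply, mul_add]
  exact integral_add (integrable_conj_mul hu hu' hv) (integrable_conj_mul hu hu' hw)

theorem ip_sub (hu : Continuous u) (hu' : HasCompactSupport u) (hv : Continuous v)
    (hw : Continuous w) : ip u (v - w) = ip u v - ip u w := by
  simp only [ip, Pi.sub_apply, mul_sub]
  exact integral_sub (integrable_conj_mul hu hu' hv) (integrable_conj_mul hu hu' hw)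

end InnerProduct

theorem X_sq_identity_R_general (r s : ℝ) (hr : 0 < r)
    (u : ℝ → ℂ) (hu : IsTest u) :
    ip u (Xop r s (Xop r s u)) =
      ((s - 1/r : ℝ) : ℂ)^2 * ip u (qOp (qOp (qOp (qOp u))))
      + 2 * ((s - 1/r : ℝ) : ℂ) * ip u (qOp (Rop r (Rop r (qOp u))))
      + ip u (Rop r (Rop r (Rop r (Rop r u))))
      - 2 * ((r*s - 1 : ℝ) : ℂ) * ip u u := by
  obtain ⟨hsmooth, hsupp⟩ := hu
  have hcont := hsmooth.continuous
  have hq4 := hsmooth.qOp.qOp.qOp.qOp.continuous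
  have hqR2q := ((hsmooth.qOp.Rop r).Rop r).qOp.continuous
  have hR4 := (((hsmooth.Rop r).Rop r).Rop r).Rop r |>.continuous
  rw [Xop_Xop_eq s hr hsmooth, ip_sub hcont hsupp (by fun_prop) (by fun_prop),
    ip_add hcont hsupp (by fun_prop) hR4, ip_add hcont hsupp (by fun_prop) (by fun_prop),
    ip_smul, ip_smul, ip_smul]

/-- `⟨u, X² u⟩ = (s − 1/r)² ⟨u, q⁴ u⟩ + 2(s − 1/r) ⟨u, q R² q u⟩ + ⟨u, R⁴ u⟩ − 2(rs − 1) ‖u‖²`. -/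
theorem X_sq_identity_R (r s : ℝ) (hr : 0 < r) (hs : 0 < s) (hrs : 1 < r * s)
    (u : ℝ → ℂ) (hu : IsTest u) :
    ip u (Xop r s (Xop r s u)) =
      ((s - 1/r : ℝ) : ℂ)^2 * ip u (qOp (qOp (qOp (qOp u))))
      + 2 * ((s - 1/r : ℝ) : ℂ) * ip u (qOp (Rop r (Rop r (qOp u))))
      + ip u (Rop r (Rop r (Rop r (Rop r u))))
      - 2 * ((r*s - 1 : ℝ) : ℂ) * ip u u :=
  X_sq_identity_R_general r s hr u hu
end
end
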